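/- arXiv:0907.4812 — 2 statements merged into one kernel-verified Lean document; each statement's English description precedes it below -/
import Mathlib

section
/- Datko–Pazy type criterion via entry times: if ‖T(t)‖ ≤ 1 for all t and ∫_0^∞ ‖T(t)‖^p dt < ∞ for some 0 < p < ∞, then the relative entry times u_r satisfy lim_r u_r < ∞, hence the semigroup is exponentially stable. -/
open scoped ENNReal
open Filter Topology MeasureTheory

/-- Final entry time of `x` into the ball of radius `e^{-r}`:
`t_r(x) = inf { t ≥ 0 : ‖T(t')x‖ ≤ e^{-r} for all t' ≥ t }`, with `inf ∅ = ∞`. -/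
noncomputable def entryTime {X : Type*} [NormedAddCommGroup X] [NormedSpace ℝ X]
    (T : ℝ → X →L[ℝ] X) (r : ℕ) (x : X) : ℝ≥0∞ :=
  sInf {t : ℝ≥0∞ | ∀ t' : ℝ, 0 ≤ t' → t ≤ ENNReal.ofReal t' →
    ‖T t' x‖ ≤ Real.exp (-(r : ℝ))}

/-- `t_r = sup { t_r(x) : ‖x‖ ≤ 1 }`. -/
noncomputable def ballEntryTime {X : Type*} [NormedAddCommGroup X] [NormedSpace ℝ X]
    (T : ℝ → X →L[ℝ] X) (r : ℕ) : ℝ≥0∞ :=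
  ⨆ x ∈ {x : X | ‖x‖ ≤ 1}, entryTime T r x

/-- Relative entry time `u_r = t_{r+1} - t_r`, with `u_r = ∞` when `t_{r+1} = ∞`. -/
noncomputable def relEntryTime {X : Type*} [NormedAddCommGroup X] [NormedSpace ℝ X]
    (T : ℝ → X →L[ℝ] X) (r : ℕ) : ℝ≥0∞ :=
  if ballEntryTime T (r + 1) = ⊤ then ⊤
  else ballEntryTime T (r + 1) - ballEntryTime T r

/-!
Integrability of `‖T t‖ ^ p` over `(0, ∞)` rules out `‖T t‖ ≥ 1` for all `t > 0`, so some
`‖T s‖ < 1`, and by submultiplicativity some `s₀ > 0` has `‖T s₀‖ ≤ e⁻¹`. Applying `T s₀` to an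
orbit that has entered the ball of radius `e^{-r}` puts it into the ball of radius `e^{-(r+1)}`,
so `t_{r+1} ≤ t_r + s₀` and every `u_r ≤ s₀`. Since `‖T t‖` is non-increasing,
`‖T t‖ ≤ e^{-⌊t / s₀⌋} ≤ e · e^{-t / s₀}`.
-/

theorem exists_lt_one_of_lintegral_rpow_lt_top {f : ℝ → ℝ} {p : ℝ} (hp : 0 ≤ p)
    (hf : ∫⁻ t in Set.Ioi (0 : ℝ), ENNReal.ofReal (f t ^ p) < ⊤) :
    ∃ s : ℝ, 0 < s ∧ f s < 1 := by
  by_contra! hge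
  have htop : ∫⁻ _ in Set.Ioi (0 : ℝ), (1 : ℝ≥0∞) ≤
      ∫⁻ t in Set.Ioi (0 : ℝ), ENNReal.ofReal (f t ^ p) :=
    setLIntegral_mono' measurableSet_Ioi fun t ht =>
      ENNReal.one_le_ofReal.mpr (Real.one_le_rpow (hge t ht) hp)
  rw [setLIntegral_const, Real.volume_Ioi, one_mul, top_le_iff] at htop
  exact hf.ne htop

section Semigroup

variable {X : Type*} [NormedAddCommGroup X] [NormedSpace ℝ X] {T : ℝ → X →L[ℝ] X}

theorem norm_semigroup_add_le
    (hTmul : ∀ s t : ℝ, 0 ≤ s → 0 ≤ t → T (s + t) = (T s).comp (T t))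
    {s t : ℝ} (hs : 0 ≤ s) (ht : 0 ≤ t) : ‖T (s + t)‖ ≤ ‖T s‖ * ‖T t‖ := by
  rw [hTmul s t hs ht]
  exact (T s).opNorm_comp_le (T t)

theorem norm_semigroup_nat_mul_le
    (hTmul : ∀ s t : ℝ, 0 ≤ s → 0 ≤ t → T (s + t) = (T s).comp (T t))
    (h0 : ‖T 0‖ ≤ 1) {s : ℝ} (hs : 0 ≤ s) (n : ℕ) : ‖T (n * s)‖ ≤ ‖T s‖ ^ n := by
  induction n with
  | zero => simpa using h0
  | succ n ih =>
    calc ‖T ((n + 1 : ℕ) * s)‖ = ‖T (s + n * s)‖ := by push_cast; ring_nf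
    _ ≤ ‖T s‖ * ‖T (n * s)‖ := norm_semigroup_add_le hTmul hs (by positivity)
    _ ≤ ‖T s‖ * ‖T s‖ ^ n := by gcongr
    _ = ‖T s‖ ^ (n + 1) := by ring

theorem antitoneOn_norm_semigroup
    (hTmul : ∀ s t : ℝ, 0 ≤ s → 0 ≤ t → T (s + t) = (T s).comp (T t))
    (hcontr : ∀ t : ℝ, 0 ≤ t → ‖T t‖ ≤ 1) : AntitoneOn (fun t => ‖T t‖) (Set.Ici 0) := by
  intro s hs t _ hst
  calc ‖T t‖ = ‖T ((t - s) + s)‖ := by ring_nf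
  _ ≤ ‖T (t - s)‖ * ‖T s‖ := norm_semigroup_add_le hTmul (by linarith) hs
  _ ≤ ‖T s‖ := mul_le_of_le_one_left (norm_nonneg _) (hcontr _ (by linarith))

theorem exists_norm_semigroup_le_exp_neg_one
    (hTmul : ∀ s t : ℝ, 0 ≤ s → 0 ≤ t → T (s + t) = (T s).comp (T t))
    (h0 : ‖T 0‖ ≤ 1) {s : ℝ} (hs : 0 < s) (hTs : ‖T s‖ < 1) :
    ∃ s₀ : ℝ, 0 < s₀ ∧ ‖T s₀‖ ≤ Real.exp (-1) := by
  obtain ⟨n, hn⟩ := exists_pow_lt_of_lt_one (Real.exp_pos (-1)) hTs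
  -- `n ≠ 0` because `‖T s‖ ^ 0 = 1 > e⁻¹`.
  have hn0 : 0 < n := Nat.pos_of_ne_zero <| by
    rintro rfl
    norm_num at hn
  exact ⟨n * s, by positivity, (norm_semigroup_nat_mul_le hTmul h0 hs.le n).trans hn.le⟩

theorem norm_semigroup_le_exp_neg_nat
    (hTmul : ∀ s t : ℝ, 0 ≤ s → 0 ≤ t → T (s + t) = (T s).comp (T t))
    (hcontr : ∀ t : ℝ, 0 ≤ t → ‖T t‖ ≤ 1) {s₀ : ℝ} (hs₀ : 0 ≤ s₀)
    (hTs₀ : ‖T s₀‖ ≤ Real.exp (-1)) {r : ℕ} {t : ℝ} (hrt : r * s₀ ≤ t) :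
    ‖T t‖ ≤ Real.exp (-r) := by
  have hr : 0 ≤ r * s₀ := by positivity
  calc ‖T t‖ ≤ ‖T (r * s₀)‖ :=
        antitoneOn_norm_semigroup hTmul hcontr hr (hr.trans hrt) hrt
  _ ≤ ‖T s₀‖ ^ r := norm_semigroup_nat_mul_le hTmul (hcontr 0 le_rfl) hs₀ r
  _ ≤ Real.exp (-1) ^ r := by gcongr
  _ = Real.exp (-r) := by rw [← Real.exp_nat_mul]; ring_nf

theorem norm_semigroup_le_exp_mul_exp
    (hTmul : ∀ s t : ℝ, 0 ≤ s → 0 ≤ t → T (s + t) = (T s).comp (T t))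
    (hcontr : ∀ t : ℝ, 0 ≤ t → ‖T t‖ ≤ 1) {s₀ : ℝ} (hs₀ : 0 < s₀)
    (hTs₀ : ‖T s₀‖ ≤ Real.exp (-1)) {t : ℝ} (ht : 0 ≤ t) :
    ‖T t‖ ≤ Real.exp 1 * Real.exp (-(1 / s₀) * t) := by
  have hdiv : 0 ≤ t / s₀ := div_nonneg ht hs₀.le
  have hfloor : ⌊t / s₀⌋₊ * s₀ ≤ t := (le_div_iff₀ hs₀).mp (Nat.floor_le hdiv)
  calc ‖T t‖ ≤ Real.exp (-⌊t / s₀⌋₊) :=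
        norm_semigroup_le_exp_neg_nat hTmul hcontr hs₀.le hTs₀ hfloor
  _ ≤ Real.exp (1 - t / s₀) := by
        gcongr
        linarith [Nat.lt_floor_add_one (t / s₀)]
  _ = Real.exp 1 * Real.exp (-(1 / s₀) * t) := by rw [← Real.exp_add]; ring_nf

theorem entryTime_le_ofReal {r : ℕ} {x : X} {a : ℝ}
    (h : ∀ t : ℝ, a ≤ t → ‖T t x‖ ≤ Real.exp (-r)) : entryTime T r x ≤ ENNReal.ofReal a :=
  sInf_le fun t ht hat => h t ((ENNReal.ofReal_le_ofReal_iff ht).mp hat)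

theorem ballEntryTime_le_ofReal
    (hTmul : ∀ s t : ℝ, 0 ≤ s → 0 ≤ t → T (s + t) = (T s).comp (T t))
    (hcontr : ∀ t : ℝ, 0 ≤ t → ‖T t‖ ≤ 1) {s₀ : ℝ} (hs₀ : 0 ≤ s₀)
    (hTs₀ : ‖T s₀‖ ≤ Real.exp (-1)) (r : ℕ) :
    ballEntryTime T r ≤ ENNReal.ofReal (r * s₀) := by
  refine iSup₂_le fun x (hx : ‖x‖ ≤ 1) => entryTime_le_ofReal fun t hrt => ?_
  calc ‖T t x‖ ≤ ‖T t‖ * ‖x‖ := (T t).le_opNorm x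
  _ ≤ ‖T t‖ := mul_le_of_le_one_right (norm_nonneg _) hx
  _ ≤ Real.exp (-r) := norm_semigroup_le_exp_neg_nat hTmul hcontr hs₀ hTs₀ hrt

theorem entryTime_succ_le_add
    (hTmul : ∀ s t : ℝ, 0 ≤ s → 0 ≤ t → T (s + t) = (T s).comp (T t))
    {s₀ : ℝ} (hs₀ : 0 ≤ s₀) (hTs₀ : ‖T s₀‖ ≤ Real.exp (-1)) (r : ℕ) (x : X) :
    entryTime T (r + 1) x ≤ entryTime T r x + ENNReal.ofReal s₀ := by
  simp only [entryTime, ENNReal.sInf_add]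
  refine le_iInf₂ fun a ha => sInf_le fun t ht hat => ?_
  have hst : s₀ ≤ t := (ENNReal.ofReal_le_ofReal_iff ht).mp (le_add_self.trans hat)
  have hat' : a ≤ ENNReal.ofReal (t - s₀) := by
    rwa [ENNReal.ofReal_sub _ hs₀, ENNReal.le_sub_iff_add_le_right ENNReal.ofReal_ne_top
      (ENNReal.ofReal_le_ofReal hst)]
  calc ‖T t x‖ = ‖T s₀ (T (t - s₀) x)‖ := by
        rw [← ContinuousLinearMap.comp_apply, ← hTmul _ _ hs₀ (by linarith)]
        ring_nf
  _ ≤ ‖T s₀‖ * ‖T (t - s₀) x‖ := (T s₀).le_opNorm _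
  _ ≤ Real.exp (-1) * Real.exp (-r) := by
        gcongr
        exact ha (t - s₀) (by linarith) hat'
  _ = Real.exp (-((r + 1 : ℕ) : ℝ)) := by rw [← Real.exp_add]; push_cast; ring_nf

theorem ballEntryTime_succ_le_add
    (hTmul : ∀ s t : ℝ, 0 ≤ s → 0 ≤ t → T (s + t) = (T s).comp (T t))
    {s₀ : ℝ} (hs₀ : 0 ≤ s₀) (hTs₀ : ‖T s₀‖ ≤ Real.exp (-1)) (r : ℕ) :
    ballEntryTime T (r + 1) ≤ ballEntryTime T r + ENNReal.ofReal s₀ :=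
  iSup₂_le fun x hx => (entryTime_succ_le_add hTmul hs₀ hTs₀ r x).trans <|
    add_le_add_left (le_iSup₂ (f := fun x (_ : x ∈ {x : X | ‖x‖ ≤ 1}) => entryTime T r x) x hx) _

theorem relEntryTime_le_ofReal
    (hTmul : ∀ s t : ℝ, 0 ≤ s → 0 ≤ t → T (s + t) = (T s).comp (T t))
    (hcontr : ∀ t : ℝ, 0 ≤ t → ‖T t‖ ≤ 1) {s₀ : ℝ} (hs₀ : 0 ≤ s₀)
    (hTs₀ : ‖T s₀‖ ≤ Real.exp (-1)) (r : ℕ) : relEntryTime T r ≤ ENNReal.ofReal s₀ := by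
  have hfin : ballEntryTime T (r + 1) ≠ ⊤ :=
    ((ballEntryTime_le_ofReal hTmul hcontr hs₀ hTs₀ (r + 1)).trans_lt ENNReal.ofReal_lt_top).ne
  rw [relEntryTime, if_neg hfin, tsub_le_iff_right, add_comm (ENNReal.ofReal s₀)]
  exact ballEntryTime_succ_le_add hTmul hs₀ hTs₀ r

end Semigroup

theorem stable_of_datko_pazy_general {X : Type*} [NormedAddCommGroup X]
    [NormedSpace ℝ X] (T : ℝ → X →L[ℝ] X)
    (hTmul : ∀ s t : ℝ, 0 ≤ s → 0 ≤ t → T (s + t) = (T s).comp (T t))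
    (hcontr : ∀ t : ℝ, 0 ≤ t → ‖T t‖ ≤ 1)
    (p : ℝ) (hp : 0 < p)
    (hint : ∫⁻ t in Set.Ioi (0 : ℝ), ENNReal.ofReal (‖T t‖ ^ p) < ⊤) :
    Filter.limsup (fun r => relEntryTime T r) Filter.atTop < ⊤ ∧
    ∃ M : ℝ, 0 < M ∧ ∃ ρ : ℝ, 0 < ρ ∧ ∀ t : ℝ, 0 ≤ t →
      ‖T t‖ ≤ M * Real.exp (-ρ * t) := by
  obtain ⟨s, hs, hTs⟩ := exists_lt_one_of_lintegral_rpow_lt_top hp.le hint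
  obtain ⟨s₀, hs₀, hTs₀⟩ :=
    exists_norm_semigroup_le_exp_neg_one hTmul (hcontr 0 le_rfl) hs hTs
  refine ⟨?_, Real.exp 1, Real.exp_pos 1, 1 / s₀, by positivity, fun t ht =>
    norm_semigroup_le_exp_mul_exp hTmul hcontr hs₀ hTs₀ ht⟩
  calc Filter.limsup (fun r => relEntryTime T r) Filter.atTop ≤ ENNReal.ofReal s₀ :=
        limsup_le_of_le (h := .of_forall (relEntryTime_le_ofReal hTmul hcontr hs₀.le hTs₀))
  _ < ⊤ := ENNReal.ofReal_lt_top

/-- Datko–Pazy criterion via entry times: for a contraction C₀-semigroup with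
`∫_0^∞ ‖T(t)‖^p dt < ∞` for some `0 < p < ∞`, the relative entry times satisfy
`lim_r u_r < ∞`, hence the semigroup is exponentially stable. -/
theorem stable_of_datko_pazy {X : Type*} [NormedAddCommGroup X]
    [NormedSpace ℝ X] (T : ℝ → X →L[ℝ] X)
    (hT0 : T 0 = 1)
    (hTmul : ∀ s t : ℝ, 0 ≤ s → 0 ≤ t → T (s + t) = (T s).comp (T t))
    (hTcont : ∀ x : X, ContinuousOn (fun t => T t x) (Set.Ici 0))
    (hcontr : ∀ t : ℝ, 0 ≤ t → ‖T t‖ ≤ 1)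
    (p : ℝ) (hp : 0 < p)
    (hint : ∫⁻ t in Set.Ioi (0 : ℝ), ENNReal.ofReal (‖T t‖ ^ p) < ⊤) :
    Filter.limsup (fun r => relEntryTime T r) Filter.atTop < ⊤ ∧
    ∃ M : ℝ, 0 < M ∧ ∃ ρ : ℝ, 0 < ρ ∧ ∀ t : ℝ, 0 ≤ t →
      ‖T t‖ ≤ M * Real.exp (-ρ * t) :=
  stable_of_datko_pazy_general T hTmul hcontr p hp hint
end

section
/- Sandwiching lemma for entry times: if ‖T(t)‖ ≤ 1 for all t and F : ℝ ∪ {±∞} → [0,∞] is decreasing with F(∞) = 0, then Σ_{r=0}^∞ u_r F(r+1) ≤ ∫_0^∞ F(−log ‖T(t)‖) dt ≤ Σ_{r=0}^∞ u_r F(r). -/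
open scoped ENNReal
open Filter Topology MeasureTheory

/-- `-log ‖T(t)‖` valued in the extended reals, with `-log 0 = ∞`. -/
noncomputable def negElogNorm {X : Type*} [NormedAddCommGroup X] [NormedSpace ℝ X]
    (T : ℝ → X →L[ℝ] X) (t : ℝ) : EReal :=
  if ‖T t‖ = 0 then ⊤ else ((-Real.log ‖T t‖ : ℝ) : EReal)

/-!
Write `τ r = t_r`. Since `t ↦ ‖T t‖` is nonincreasing, `τ r < t` forces `‖T t‖ ≤ e^{-r}`, while
`t < τ (r+1)` forces `‖T t‖ > e^{-(r+1)}`. Hence on `(τ r, τ (r+1)]` the integrand lies between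
`F (r+1)` and `F r` (almost everywhere, the endpoint being null), beyond every `τ r` it vanishes
because `T t = 0` there, and the interval has length `τ (r+1) - τ r ≤ u_r`. The only subtlety is
`u_r = ∞` when `τ r = τ (r+1) = ∞`: such terms are dominated by the first infinite one.
-/

open Set

lemma volume_preimage_ofReal_Ioc (a b : ℝ≥0∞) :
    volume (ENNReal.ofReal ⁻¹' Ioc a b) = b - a := by
  rcases eq_or_ne a ⊤ with rfl | ha
  · simp
  rcases eq_or_ne b ⊤ with rfl | hb
  · have : ENNReal.ofReal ⁻¹' Ioc a ⊤ = Ioi a.toReal := by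
      ext t
      simp [ENNReal.lt_ofReal_iff_toReal_lt ha]
    rw [this]
    simp [ha]
  · have : ENNReal.ofReal ⁻¹' Ioc a b = Ioc a.toReal b.toReal := by
      ext t
      simp [ENNReal.lt_ofReal_iff_toReal_lt ha, ENNReal.ofReal_le_iff_le_toReal hb]
    rw [this, Real.volume_Ioc, ENNReal.ofReal_sub _ ENNReal.toReal_nonneg,
      ENNReal.ofReal_toReal ha, ENNReal.ofReal_toReal hb]

lemma volume_preimage_ofReal_Ioo (a b : ℝ≥0∞) :
    volume (ENNReal.ofReal ⁻¹' Ioo a b) = b - a := by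
  rcases eq_or_ne a ⊤ with rfl | ha
  · simp
  rcases eq_or_ne b ⊤ with rfl | hb
  · have : ENNReal.ofReal ⁻¹' Ioo a ⊤ = Ioi a.toReal := by
      ext t
      simp [ENNReal.lt_ofReal_iff_toReal_lt ha]
    simp [this, ha]
  · have : ENNReal.ofReal ⁻¹' Ioo a b = Ioo a.toReal b.toReal := by
      ext t
      simp only [mem_preimage, mem_Ioo, ENNReal.lt_ofReal_iff_toReal_lt ha]
      exact and_congr_right fun h =>
        ENNReal.ofReal_lt_iff_lt_toReal (ENNReal.toReal_nonneg.trans h.le) hb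
    rw [this, Real.volume_Ioo, ENNReal.ofReal_sub _ ENNReal.toReal_nonneg,
      ENNReal.ofReal_toReal ha, ENNReal.ofReal_toReal hb]

lemma tsum_ite_top_sub_mul_le {τ c : ℕ → ℝ≥0∞} (hτ : Monotone τ) (hτ0 : τ 0 ≠ ⊤)
    (hc : Antitone c) :
    ∑' r, (if τ (r + 1) = ⊤ then ⊤ else τ (r + 1) - τ r) * c r ≤
      ∑' r, (τ (r + 1) - τ r) * c r := by
  by_cases hfin : ∃ n, τ n = ⊤
  swap
  · push Not at hfin
    simp [hfin]
  obtain ⟨M, hM, hM1⟩ := Nat.exists_not_and_succ_of_not_zero_of_exists hτ0 hfin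
  by_cases hcM : c M = 0
  · refine ENNReal.tsum_le_tsum fun r => ?_
    rcases lt_or_ge r M with hrM | hMr
    · have : τ (r + 1) ≠ ⊤ := ne_top_of_le_ne_top hM (hτ hrM)
      simp [this]
    · simp [le_zero_iff.mp (hcM ▸ hc hMr)]
  · calc _ ≤ ⊤ := le_top
      _ = (τ (M + 1) - τ M) * c M := by simp [hM1, hM, hcM]
      _ ≤ _ := ENNReal.le_tsum M

section Semigroup

variable {X : Type*} [NormedAddCommGroup X] [NormedSpace ℝ X] {T : ℝ → X →L[ℝ] X}

lemma antitoneOn_norm_of_contraction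
    (hTmul : ∀ s t : ℝ, 0 ≤ s → 0 ≤ t → T (s + t) = (T s).comp (T t))
    (hcontr : ∀ t : ℝ, 0 ≤ t → ‖T t‖ ≤ 1) :
    AntitoneOn (fun t => ‖T t‖) (Ici 0) := by
  intro s hs t _ hst
  have hsplit : T t = (T (t - s)).comp (T s) := by
    simpa using hTmul (t - s) s (sub_nonneg.mpr hst) hs
  calc ‖T t‖ ≤ ‖T (t - s)‖ * ‖T s‖ := hsplit ▸ (T (t - s)).opNorm_comp_le (T s)
    _ ≤ ‖T s‖ := mul_le_of_le_one_left (norm_nonneg _) (hcontr _ (sub_nonneg.mpr hst))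

lemma ballEntryTime_mono (T : ℝ → X →L[ℝ] X) : Monotone (ballEntryTime T) := by
  refine monotone_nat_of_le_succ fun r => iSup₂_mono fun x _ => sInf_le_sInf ?_
  intro t ht t' ht' htt'
  exact (ht t' ht' htt').trans (Real.exp_le_exp.mpr (by push_cast; linarith))

lemma norm_le_of_ballEntryTime_lt {r : ℕ} {t : ℝ} (ht : 0 ≤ t)
    (h : ballEntryTime T r < ENNReal.ofReal t) : ‖T t‖ ≤ Real.exp (-(r : ℝ)) := by
  refine ContinuousLinearMap.opNorm_le_of_unit_norm (Real.exp_pos _).le fun x hx => ?_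
  have hxt : entryTime T r x < ENNReal.ofReal t :=
    (le_iSup₂ (f := fun y (_ : y ∈ {y : X | ‖y‖ ≤ 1}) => entryTime T r y) x hx.le).trans_lt h
  obtain ⟨s, hs, hst⟩ := sInf_lt_iff.mp hxt
  exact hs t ht hst.le

lemma ballEntryTime_le_of_norm_le
    (hTmul : ∀ s t : ℝ, 0 ≤ s → 0 ≤ t → T (s + t) = (T s).comp (T t))
    (hcontr : ∀ t : ℝ, 0 ≤ t → ‖T t‖ ≤ 1)
    {r : ℕ} {t : ℝ} (ht : 0 ≤ t) (h : ‖T t‖ ≤ Real.exp (-(r : ℝ))) :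
    ballEntryTime T r ≤ ENNReal.ofReal t := by
  refine iSup₂_le fun x hx => sInf_le fun t' ht' htt' => ?_
  have htt' : t ≤ t' := (ENNReal.ofReal_le_ofReal_iff ht').mp htt'
  calc ‖T t' x‖ ≤ ‖T t'‖ * ‖x‖ := (T t').le_opNorm x
    _ ≤ ‖T t'‖ := mul_le_of_le_one_right (norm_nonneg _) hx
    _ ≤ ‖T t‖ := antitoneOn_norm_of_contraction hTmul hcontr ht (ht.trans htt') htt'
    _ ≤ _ := h

lemma coe_le_negElogNorm_iff (T : ℝ → X →L[ℝ] X) (t s : ℝ) :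
    (s : EReal) ≤ negElogNorm T t ↔ ‖T t‖ ≤ Real.exp (-s) := by
  unfold negElogNorm
  split_ifs with h
  · simp [h, (Real.exp_pos _).le]
  · rw [EReal.coe_le_coe_iff, le_neg, Real.log_le_iff_le_exp ((norm_nonneg _).lt_of_ne' h)]

lemma coe_le_negElogNorm_of_ballEntryTime_lt {r : ℕ} {t : ℝ}
    (h : ballEntryTime T r < ENNReal.ofReal t) : ((r : ℝ) : EReal) ≤ negElogNorm T t :=
  (coe_le_negElogNorm_iff T t r).mpr <|
    norm_le_of_ballEntryTime_lt (ENNReal.ofReal_pos.mp (pos_of_gt h)).le h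

lemma negElogNorm_le_of_lt_ballEntryTime
    (hTmul : ∀ s t : ℝ, 0 ≤ s → 0 ≤ t → T (s + t) = (T s).comp (T t))
    (hcontr : ∀ t : ℝ, 0 ≤ t → ‖T t‖ ≤ 1)
    {r : ℕ} {t : ℝ} (ht : 0 ≤ t) (h : ENNReal.ofReal t < ballEntryTime T r) :
    negElogNorm T t ≤ ((r : ℝ) : EReal) := by
  by_contra hlt
  have hnorm := (coe_le_negElogNorm_iff T t r).mp (not_le.mp hlt).le
  exact h.not_ge (ballEntryTime_le_of_norm_le hTmul hcontr ht hnorm)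

lemma negElogNorm_eq_top_of_forall_ballEntryTime_lt {t : ℝ}
    (h : ∀ r, ballEntryTime T r < ENNReal.ofReal t) : negElogNorm T t = ⊤ := by
  refine (EReal.eq_top_iff_forall_lt _).mpr fun y => ?_
  obtain ⟨n, hn⟩ := exists_nat_gt y
  exact (EReal.coe_lt_coe_iff.mpr hn).trans_le (coe_le_negElogNorm_of_ballEntryTime_lt (h n))

lemma ballEntryTime_succ_sub_le_relEntryTime (T : ℝ → X →L[ℝ] X) (r : ℕ) :
    ballEntryTime T (r + 1) - ballEntryTime T r ≤ relEntryTime T r := by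
  unfold relEntryTime
  split_ifs <;> simp

lemma tsum_relEntryTime_mul_le_lintegral
    (hTmul : ∀ s t : ℝ, 0 ≤ s → 0 ≤ t → T (s + t) = (T s).comp (T t))
    (hcontr : ∀ t : ℝ, 0 ≤ t → ‖T t‖ ≤ 1) (ht0 : ballEntryTime T 0 = 0)
    {F : EReal → ℝ≥0∞} (hF : Antitone F) :
    (∑' r : ℕ, relEntryTime T r * F (((r : ℝ) + 1 : ℝ) : EReal)) ≤
      ∫⁻ t in Ioi (0 : ℝ), F (negElogNorm T t) := by
  set K : ℕ → Set ℝ := fun r =>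
    ENNReal.ofReal ⁻¹' Ioo (ballEntryTime T r) (ballEntryTime T (r + 1))
  have hK : ∀ r, MeasurableSet (K r) := fun r => ENNReal.measurable_ofReal measurableSet_Ioo
  have hF_K : ∀ r, ∀ t ∈ K r, F (((r : ℝ) + 1 : ℝ) : EReal) ≤ F (negElogNorm T t) :=
    fun r t ht => hF <| by
      simpa using negElogNorm_le_of_lt_ballEntryTime hTmul hcontr
        (ENNReal.ofReal_pos.mp (pos_of_gt ht.1)).le ht.2
  have hK_disj : Pairwise (Function.onFun Disjoint K) := fun i j hij =>
    ((ballEntryTime_mono T).pairwise_disjoint_on_Ioo_succ hij).preimage _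
  calc _ ≤ ∑' r, (ballEntryTime T (r + 1) - ballEntryTime T r) *
          F (((r : ℝ) + 1 : ℝ) : EReal) :=
        tsum_ite_top_sub_mul_le (ballEntryTime_mono T) (by simp [ht0])
          fun m n hmn => hF (by exact_mod_cast Nat.add_le_add_right hmn 1)
    _ = ∑' r, ∫⁻ _ in K r, F (((r : ℝ) + 1 : ℝ) : EReal) := by
        simp [K, volume_preimage_ofReal_Ioo, mul_comm]
    _ ≤ ∑' r, ∫⁻ t in K r, F (negElogNorm T t) :=
        ENNReal.tsum_le_tsum fun r => setLIntegral_mono' (hK r) (hF_K r)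
    _ = ∫⁻ t in ⋃ r, K r, F (negElogNorm T t) := (lintegral_iUnion hK hK_disj _).symm
    _ ≤ _ := lintegral_mono_set <| iUnion_subset fun r t ht =>
        ENNReal.ofReal_pos.mp (pos_of_gt ht.1)

lemma lintegral_le_tsum_relEntryTime_mul (ht0 : ballEntryTime T 0 = 0)
    {F : EReal → ℝ≥0∞} (hF : Antitone F) (hFtop : F ⊤ = 0) :
    (∫⁻ t in Ioi (0 : ℝ), F (negElogNorm T t)) ≤
      ∑' r : ℕ, relEntryTime T r * F (((r : ℝ) : ℝ) : EReal) := by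
  set I : ℕ → Set ℝ := fun r =>
    ENNReal.ofReal ⁻¹' Ioc (ballEntryTime T r) (ballEntryTime T (r + 1))
  have hI : ∀ r, MeasurableSet (I r) := fun r => ENNReal.measurable_ofReal measurableSet_Ioc
  have hF_le : ∀ t ∈ Ioi (0 : ℝ),
      F (negElogNorm T t) ≤ ∑' r : ℕ, (I r).indicator (fun _ => F ((r : ℝ) : EReal)) t := by
    intro t ht
    by_cases hreach : ∃ n, ENNReal.ofReal t ≤ ballEntryTime T n
    · obtain ⟨r, hr, hr1⟩ := Nat.exists_not_and_succ_of_not_zero_of_exists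
        (by simpa [ht0] using ht) hreach
      have htI : t ∈ I r := ⟨not_le.mp hr, hr1⟩
      calc F (negElogNorm T t) ≤ F ((r : ℝ) : EReal) :=
            hF (coe_le_negElogNorm_of_ballEntryTime_lt htI.1)
        _ = (I r).indicator (fun _ => F ((r : ℝ) : EReal)) t :=
            (indicator_of_mem htI (fun _ => F ((r : ℝ) : EReal))).symm
        _ ≤ _ := ENNReal.le_tsum r
    · push Not at hreach
      simp [negElogNorm_eq_top_of_forall_ballEntryTime_lt hreach, hFtop]
  calc _ ≤ ∫⁻ t in Ioi (0 : ℝ),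
          ∑' r : ℕ, (I r).indicator (fun _ => F ((r : ℝ) : EReal)) t :=
        setLIntegral_mono' measurableSet_Ioi hF_le
    _ ≤ ∫⁻ t, ∑' r : ℕ, (I r).indicator (fun _ => F ((r : ℝ) : EReal)) t :=
        setLIntegral_le_lintegral _ _
    _ = ∑' r, (ballEntryTime T (r + 1) - ballEntryTime T r) * F ((r : ℝ) : EReal) := by
        rw [lintegral_tsum fun r => aemeasurable_const.indicator (hI r)]
        simp [lintegral_indicator_const (hI _), I, volume_preimage_ofReal_Ioc, mul_comm]
    _ ≤ _ := ENNReal.tsum_le_tsum fun r =>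
        mul_le_mul_left (ballEntryTime_succ_sub_le_relEntryTime T r) _

end Semigroup

theorem entryTime_sandwich_general {X : Type*} [NormedAddCommGroup X]
    [NormedSpace ℝ X] (T : ℝ → X →L[ℝ] X)
    (hTmul : ∀ s t : ℝ, 0 ≤ s → 0 ≤ t → T (s + t) = (T s).comp (T t))
    (hcontr : ∀ t : ℝ, 0 ≤ t → ‖T t‖ ≤ 1)
    (ht0 : ballEntryTime T 0 = 0)
    (F : EReal → ℝ≥0∞) (hF : Antitone F) (hFtop : F ⊤ = 0) :
    (∑' r : ℕ, relEntryTime T r * F (((r : ℝ) + 1 : ℝ) : EReal)) ≤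
      (∫⁻ t in Set.Ioi (0 : ℝ), F (negElogNorm T t)) ∧
    (∫⁻ t in Set.Ioi (0 : ℝ), F (negElogNorm T t)) ≤
      ∑' r : ℕ, relEntryTime T r * F (((r : ℝ) : ℝ) : EReal) :=
  ⟨tsum_relEntryTime_mul_le_lintegral hTmul hcontr ht0 hF,
    lintegral_le_tsum_relEntryTime_mul ht0 hF hFtop⟩

/-- Sandwiching lemma: for a contraction C₀-semigroup with `t_0 = 0` and `F`
nonincreasing on the extended reals with `F(∞) = 0`,
`Σ_r u_r F(r+1) ≤ ∫_0^∞ F(-log ‖T(t)‖) dt ≤ Σ_r u_r F(r)`. -/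
theorem entryTime_sandwich {X : Type*} [NormedAddCommGroup X]
    [NormedSpace ℝ X] (T : ℝ → X →L[ℝ] X)
    (hT0 : T 0 = 1)
    (hTmul : ∀ s t : ℝ, 0 ≤ s → 0 ≤ t → T (s + t) = (T s).comp (T t))
    (hTcont : ∀ x : X, ContinuousOn (fun t => T t x) (Set.Ici 0))
    (hcontr : ∀ t : ℝ, 0 ≤ t → ‖T t‖ ≤ 1)
    (ht0 : ballEntryTime T 0 = 0)
    (F : EReal → ℝ≥0∞) (hF : Antitone F) (hFtop : F ⊤ = 0) :
    (∑' r : ℕ, relEntryTime T r * F (((r : ℝ) + 1 : ℝ) : EReal)) ≤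
      (∫⁻ t in Set.Ioi (0 : ℝ), F (negElogNorm T t)) ∧
    (∫⁻ t in Set.Ioi (0 : ℝ), F (negElogNorm T t)) ≤
      ∑' r : ℕ, relEntryTime T r * F (((r : ℝ) : ℝ) : EReal) :=
  entryTime_sandwich_general T hTmul hcontr ht0 F hF hFtop
end
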